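/- Let G be an infinite discrete group and let μ be an irreducible probability measure on G. Then for every g ∈ G, μ^{⋆n}({g}) → 0 as n → ∞. -/

import Mathlib

open Filter Topology
open scoped Classical

variable {G : Type*}

/-- Convolution of two summable "measures" (functions) on a discrete group:
`(ν ⋆ μ)(g) = ∑_{a·b=g} ν(a) μ(b)`. -/
noncomputable def mconv [Group G] (ν μ : G → ℝ) : G → ℝ :=
  fun g => ∑' a : G, ν a * μ (a⁻¹ * g)

/-- The `n`-th convolution power of `μ`, with `convPow μ 0 = δ_e` and `convPow μ 1 = μ`. -/
noncomputable def convPow [Group G] (μ : G → ℝ) : ℕ → G → ℝ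
  | 0 => fun g => if g = 1 then 1 else 0
  | n + 1 => mconv (convPow μ n) μ

/-- `μ` is a probability measure on the discrete group `G`. -/
def IsProbMeas [Group G] (μ : G → ℝ) : Prop :=
  (∀ g, 0 ≤ μ g) ∧ HasSum μ 1

/-- `μ` is irreducible: every point is charged by some convolution power `μ^{⋆n}`, `n ≥ 1`. -/
def MeasIrreducible [Group G] (μ : G → ℝ) : Prop :=
  ∀ g : G, ∃ n : ℕ, 1 ≤ n ∧ 0 < convPow μ n g

/-- The convolution action of a measure `μ` on a function `f ∈ c₀(G)`:
`(f ⋆ μ)(g) = ∑_h f(g·h) μ(h)`. -/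
noncomputable def actConv [Group G] (f : G → ℂ) (μ : G → ℝ) : G → ℂ :=
  fun g => ∑' h : G, f (g * h) * (μ h : ℂ)

/-- A function on a discrete space vanishes at infinity iff it tends to `0`
along the cofinite filter. -/
def ZeroAtInfty (f : G → ℂ) : Prop := Tendsto f cofinite (𝓝 0)

/-! The squared `ℓ²` norms `‖μ^{⋆n}‖₂²` decrease, and averaging over `h` with weights
`μ^{⋆k}(h)` the squared distance between `μ^{⋆(n+k)}` and the right translate of `μ^{⋆n}`
by `h` gives exactly `‖μ^{⋆n}‖₂² - ‖μ^{⋆(n+k)}‖₂² → 0`. Hence for any two points `h, h'` of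
the support of some `μ^{⋆k}`, the element `h h'⁻¹` lies in the subgroup `S` of those `s` for
which `μ^{⋆n}` is asymptotically invariant in `ℓ²` under right translation by `s`.
If `S` is infinite, a large mass `μ^{⋆n}(g)` would be shared by many translates `g s`, which
is impossible for a probability measure. If `S` is finite, pick `x` with `μ(x) > 0`: the support
of `μ^{⋆n}` lies in the coset `S xⁿ`; these cosets cover `G` by irreducibility, so they are
pairwise distinct as `G` is infinite, and each `g` is charged by at most one `μ^{⋆n}`. -/

section Summation

variable {α β : Type*}

theorem summable_tsum_swap_of_nonneg {F : α → β → ℝ} (hF : ∀ a b, 0 ≤ F a b)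
    (hrow : ∀ a, Summable (F a)) (hsum : Summable fun a => ∑' b, F a b) :
    Summable fun b => ∑' a, F a b :=
  ((summable_prod_of_nonneg fun p => hF p.2 p.1).1
    ((summable_prod_of_nonneg fun p => hF p.1 p.2).2 ⟨hrow, hsum⟩).prod_symm).2

theorem tsum_comm_of_nonneg {F : α → β → ℝ} (hF : ∀ a b, 0 ≤ F a b)
    (hrow : ∀ a, Summable (F a)) (hsum : Summable fun a => ∑' b, F a b) :
    ∑' a, ∑' b, F a b = ∑' b, ∑' a, F a b :=
  (Summable.tsum_comm ((summable_prod_of_nonneg fun p => hF p.1 p.2).2 ⟨hrow, hsum⟩)).symm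

end Summation

section SquareSummable

variable {α β : Type*}

noncomputable def sqNorm (u : α → ℝ) : ℝ := ∑' a, u a ^ 2

noncomputable def sqDist (u v : α → ℝ) : ℝ := ∑' a, (u a - v a) ^ 2

theorem sqNorm_nonneg (u : α → ℝ) : 0 ≤ sqNorm u := tsum_nonneg fun _ => sq_nonneg _

theorem sqDist_nonneg (u v : α → ℝ) : 0 ≤ sqDist u v := tsum_nonneg fun _ => sq_nonneg _

theorem sqDist_comm (u v : α → ℝ) : sqDist u v = sqDist v u :=
  tsum_congr fun _ => by ring

theorem sqNorm_comp_equiv (e : β ≃ α) (u : α → ℝ) : sqNorm (u ∘ e) = sqNorm u :=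
  e.tsum_eq fun a => u a ^ 2

theorem sqDist_comp_equiv (e : β ≃ α) (u v : α → ℝ) : sqDist (u ∘ e) (v ∘ e) = sqDist u v :=
  e.tsum_eq fun a => (u a - v a) ^ 2

variable {u v w : α → ℝ}

theorem summable_mul_of_summable_sq (hu : Summable (u · ^ 2)) (hv : Summable (v · ^ 2)) :
    Summable fun a => u a * v a :=
  Summable.of_norm_bounded (hu.add hv) fun a => by
    rw [Real.norm_eq_abs, abs_mul]
    nlinarith [sq_nonneg (|u a| - |v a|), sq_abs (u a), sq_abs (v a)]

theorem summable_sq_sub (hu : Summable (u · ^ 2)) (hv : Summable (v · ^ 2)) :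
    Summable fun a => (u a - v a) ^ 2 :=
  Summable.of_nonneg_of_le (fun _ => sq_nonneg _) (fun a => by nlinarith [sq_nonneg (u a + v a)])
    ((hu.mul_left 2).add (hv.mul_left 2))

theorem sq_sub_le_sqDist (hu : Summable (u · ^ 2)) (hv : Summable (v · ^ 2)) (a : α) :
    (u a - v a) ^ 2 ≤ sqDist u v :=
  (summable_sq_sub hu hv).le_tsum a fun _ _ => sq_nonneg _

theorem sqDist_eq_sqNorm_add_sqNorm_sub (hu : Summable (u · ^ 2)) (hv : Summable (v · ^ 2)) :
    sqDist u v = sqNorm u + sqNorm v - 2 * ∑' a, u a * v a := by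
  rw [sqNorm, sqNorm, ← hu.tsum_add hv, ← tsum_mul_left,
    ← (hu.add hv).tsum_sub ((summable_mul_of_summable_sq hu hv).mul_left 2)]
  exact tsum_congr fun a => by ring

theorem sqDist_le_two_mul_add (hu : Summable (u · ^ 2)) (hv : Summable (v · ^ 2))
    (hw : Summable (w · ^ 2)) : sqDist u w ≤ 2 * sqDist u v + 2 * sqDist v w := by
  rw [sqDist, sqDist, sqDist, ← tsum_mul_left, ← tsum_mul_left,
    ← ((summable_sq_sub hu hv).mul_left 2).tsum_add ((summable_sq_sub hv hw).mul_left 2)]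
  refine (summable_sq_sub hu hw).tsum_le_tsum (fun a => ?_)
    (((summable_sq_sub hu hv).mul_left 2).add ((summable_sq_sub hv hw).mul_left 2))
  nlinarith [sq_nonneg (u a + w a - 2 * v a)]

end SquareSummable

section ProbabilityMeasure

variable [Group G] {f μ ν : G → ℝ}

namespace IsProbMeas

theorem nonneg (hf : IsProbMeas f) (g : G) : 0 ≤ f g := hf.1 g

theorem hasSum (hf : IsProbMeas f) : HasSum f 1 := hf.2

theorem summable (hf : IsProbMeas f) : Summable f := hf.hasSum.summable

theorem tsum_eq (hf : IsProbMeas f) : ∑' g, f g = 1 := hf.hasSum.tsum_eq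

theorem le_one (hf : IsProbMeas f) (g : G) : f g ≤ 1 := le_hasSum hf.hasSum g fun j _ => hf.nonneg j

theorem comp_equiv (hf : IsProbMeas f) (e : G ≃ G) : IsProbMeas (f ∘ e) :=
  ⟨fun g => hf.nonneg (e g), e.hasSum_iff.2 hf.hasSum⟩

theorem exists_pos (hf : IsProbMeas f) : ∃ x, 0 < f x := by
  by_contra! h
  have hzero : f = 0 := funext fun x => le_antisymm (h x) (hf.nonneg x)
  exact one_ne_zero (hf.hasSum.unique (hzero ▸ hasSum_zero))

theorem summable_mul (hf : IsProbMeas f) {w : G → ℝ} (hw0 : ∀ g, 0 ≤ w g) (hw1 : ∀ g, w g ≤ 1) :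
    Summable fun g => f g * w g :=
  Summable.of_nonneg_of_le (fun g => mul_nonneg (hf.nonneg g) (hw0 g))
    (fun g => mul_le_of_le_one_right (hf.nonneg g) (hw1 g)) hf.summable

theorem tsum_mul_le_one (hf : IsProbMeas f) {w : G → ℝ} (hw0 : ∀ g, 0 ≤ w g)
    (hw1 : ∀ g, w g ≤ 1) : ∑' g, f g * w g ≤ 1 :=
  ((hf.summable_mul hw0 hw1).tsum_le_tsum (fun g => mul_le_of_le_one_right (hf.nonneg g) (hw1 g))
    hf.summable).trans_eq hf.tsum_eq

theorem summable_sq (hf : IsProbMeas f) : Summable (f · ^ 2) :=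
  (hf.summable_mul hf.nonneg hf.le_one).congr fun g => (sq (f g)).symm

theorem card_mul_le_one (hf : IsProbMeas f) (g : G) (t : Finset G) {c : ℝ}
    (hc : ∀ s ∈ t, c ≤ f (g * s)) : t.card * c ≤ 1 :=
  calc t.card * c = ∑ _s ∈ t, c := by rw [Finset.sum_const, nsmul_eq_mul]
    _ ≤ ∑ s ∈ t, f (g * s) := Finset.sum_le_sum hc
    _ ≤ ∑' s, f (g * s) :=
      (hf.comp_equiv (Equiv.mulLeft g)).summable.sum_le_tsum _ fun s _ => hf.nonneg (g * s)
    _ = 1 := (hf.comp_equiv (Equiv.mulLeft g)).tsum_eq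

end IsProbMeas

theorem mconv_eq_tsum_mul_inv (ν μ : G → ℝ) (g : G) :
    mconv ν μ g = ∑' h, ν (g * h⁻¹) * μ h := by
  rw [mconv, ← ((Equiv.inv G).trans (Equiv.mulLeft g)).tsum_eq]
  simp [mul_assoc]

theorem mconv_convPow_zero (ν μ : G → ℝ) : mconv ν (convPow μ 0) = ν := by
  funext g
  rw [mconv_eq_tsum_mul_inv, tsum_eq_single 1 fun h hh => by simp [convPow, hh]]
  simp [convPow]

theorem IsProbMeas.mconv (hν : IsProbMeas ν) (hμ : IsProbMeas μ) : IsProbMeas (mconv ν μ) := by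
  set F : G → G → ℝ := fun a g => ν a * μ (a⁻¹ * g)
  have hF : ∀ a g, 0 ≤ F a g := fun a g => mul_nonneg (hν.nonneg a) (hμ.nonneg _)
  have hrow : ∀ a, HasSum (F a) (ν a) := fun a => by
    simpa using (hμ.comp_equiv (Equiv.mulLeft a⁻¹)).hasSum.mul_left (ν a)
  have hsum : Summable fun a => ∑' g, F a g := by
    simpa only [(hrow _).tsum_eq] using hν.summable
  refine ⟨fun g => tsum_nonneg fun a => hF a g, ?_⟩
  refine (summable_tsum_swap_of_nonneg hF (fun a => (hrow a).summable) hsum).hasSum_iff.2 ?_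
  rw [← tsum_comm_of_nonneg hF (fun a => (hrow a).summable) hsum]
  simp only [(hrow _).tsum_eq, hν.tsum_eq]

theorem mconv_pos (hν : IsProbMeas ν) (hμ : IsProbMeas μ) {a b : G} (ha : 0 < ν a)
    (hb : 0 < μ b) : 0 < mconv ν μ (a * b) := by
  have hterm : ν a * μ (a⁻¹ * (a * b)) ≤ mconv ν μ (a * b) :=
    (hν.summable_mul (w := fun c => μ (c⁻¹ * (a * b))) (fun _ => hμ.nonneg _)
      fun _ => hμ.le_one _).le_tsum a fun c _ =>
      mul_nonneg (hν.nonneg c) (hμ.nonneg _)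
  rw [inv_mul_cancel_left] at hterm
  exact (mul_pos ha hb).trans_le hterm

theorem mconv_assoc {g k : G → ℝ} (hf : IsProbMeas f) (hg : IsProbMeas g) (hk : IsProbMeas k) :
    mconv (mconv f g) k = mconv f (mconv g k) := by
  funext x
  set F : G → G → ℝ := fun a b => f a * (g (a⁻¹ * b) * k (b⁻¹ * x))
  have hF : ∀ a b, 0 ≤ F a b := fun a b =>
    mul_nonneg (hf.nonneg a) (mul_nonneg (hg.nonneg _) (hk.nonneg _))
  have hrow : ∀ a, Summable (F a) := fun a =>
    ((hg.comp_equiv (Equiv.mulLeft a⁻¹)).summable_mul (fun _ => hk.nonneg _)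
      fun _ => hk.le_one _).mul_left (f a)
  have hrowsum : ∀ a, ∑' b, F a b = f a * mconv g k (a⁻¹ * x) := fun a => by
    rw [tsum_mul_left, mconv, ← (Equiv.mulLeft a).tsum_eq]
    simp [mul_assoc]
  have hsum : Summable fun a => ∑' b, F a b := by
    simp only [hrowsum]
    exact hf.summable_mul (fun _ => (hg.mconv hk).nonneg _) fun _ => (hg.mconv hk).le_one _
  calc mconv (mconv f g) k x = ∑' b, ∑' a, F a b := by
        simp only [mconv, F, ← tsum_mul_right, mul_assoc]
    _ = ∑' a, ∑' b, F a b := (tsum_comm_of_nonneg hF hrow hsum).symm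
    _ = mconv f (mconv g k) x := by simp only [hrowsum]; rfl

theorem IsProbMeas.convPow (hμ : IsProbMeas μ) (n : ℕ) : IsProbMeas (convPow μ n) := by
  induction n with
  | zero =>
    refine ⟨fun g => ?_, hasSum_ite_eq 1 1⟩
    change 0 ≤ if g = 1 then (1 : ℝ) else 0
    split_ifs <;> norm_num
  | succ n ih => exact ih.mconv hμ

theorem convPow_add (hμ : IsProbMeas μ) (n k : ℕ) :
    convPow μ (n + k) = mconv (convPow μ n) (convPow μ k) := by
  induction k with
  | zero => exact (mconv_convPow_zero _ _).symm
  | succ k ih =>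
    change mconv (convPow μ (n + k)) μ = mconv (convPow μ n) (mconv (convPow μ k) μ)
    rw [ih, mconv_assoc (hμ.convPow n) (hμ.convPow k) hμ]

theorem convPow_pow_pos (hμ : IsProbMeas μ) {x : G} (hx : 0 < μ x) (n : ℕ) :
    0 < convPow μ n (x ^ n) := by
  induction n with
  | zero => simp [convPow]
  | succ n ih => rw [pow_succ]; exact mconv_pos (hμ.convPow n) hμ ih hx

end ProbabilityMeasure

section Energy

variable [Group G] {μ ν v : G → ℝ}

theorem hasSum_mul_sqDist_mconv (hv : IsProbMeas v) (hν : IsProbMeas ν) :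
    HasSum (fun h => ν h * sqDist (mconv v ν) fun g => v (g * h⁻¹))
      (sqNorm v - sqNorm (mconv v ν)) := by
  set u := mconv v ν
  have hu : IsProbMeas u := hv.mconv hν
  have hvh : ∀ h : G, IsProbMeas fun g => v (g * h⁻¹) := fun h => hv.comp_equiv (Equiv.mulRight h⁻¹)
  set C : G → ℝ := fun h => ∑' g, u g * v (g * h⁻¹)
  have hsqDist : ∀ h, sqDist u (fun g => v (g * h⁻¹)) = sqNorm u + sqNorm v - 2 * C h := fun h => by
    rw [sqDist_eq_sqNorm_add_sqNorm_sub hu.summable_sq (hvh h).summable_sq,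
      ← sqNorm_comp_equiv (Equiv.mulRight h⁻¹) v]
    rfl
  -- Fubini: `∑_h ν(h) C(h) = ∑_g u(g) ∑_h v(g h⁻¹) ν(h) = ∑_g u(g)²`.
  set F : G → G → ℝ := fun h g => ν h * (u g * v (g * h⁻¹))
  have hF : ∀ h g, 0 ≤ F h g := fun h g =>
    mul_nonneg (hν.nonneg h) (mul_nonneg (hu.nonneg g) (hv.nonneg _))
  have hrow : ∀ h, Summable (F h) := fun h =>
    (hu.summable_mul (hvh h).nonneg (hvh h).le_one).mul_left (ν h)
  have hsum : Summable fun h => ∑' g, F h g := by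
    simp only [F, tsum_mul_left]
    exact hν.summable_mul (fun h => tsum_nonneg fun g => mul_nonneg (hu.nonneg g) (hv.nonneg _))
      fun h => hu.tsum_mul_le_one (hvh h).nonneg (hvh h).le_one
  have hcross : HasSum (fun h => ν h * C h) (sqNorm u) := by
    simp only [C, ← tsum_mul_left]
    refine hsum.hasSum_iff.2 ?_
    rw [tsum_comm_of_nonneg hF hrow hsum, sqNorm]
    refine tsum_congr fun g => ?_
    simp only [F, mul_left_comm (ν _), tsum_mul_left, mul_comm (ν _), ← mconv_eq_tsum_mul_inv, sq]
    rfl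
  have hterm : (fun h => ν h * sqDist u fun g => v (g * h⁻¹)) =
      fun h => ν h * (sqNorm u + sqNorm v) - 2 * (ν h * C h) :=
    funext fun h => by rw [hsqDist]; ring
  rw [hterm, show sqNorm v - sqNorm u = 1 * (sqNorm u + sqNorm v) - 2 * sqNorm u by ring]
  exact (hν.hasSum.mul_right _).sub (hcross.mul_left 2)

theorem sqNorm_mconv_le (hv : IsProbMeas v) (hν : IsProbMeas ν) :
    sqNorm (mconv v ν) ≤ sqNorm v :=
  sub_nonneg.1 <| (hasSum_mul_sqDist_mconv hv hν).nonneg fun h =>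
    mul_nonneg (hν.nonneg h) (sqDist_nonneg _ _)

theorem tendsto_sqDist_convPow_add (hμ : IsProbMeas μ) {k : ℕ} {h : G}
    (hk : 0 < convPow μ k h) :
    Tendsto (fun n => sqDist (convPow μ (n + k)) fun g => convPow μ n (g * h⁻¹)) atTop (𝓝 0) := by
  have hanti : Antitone fun n => sqNorm (convPow μ n) :=
    antitone_nat_of_succ_le fun n => sqNorm_mconv_le (hμ.convPow n) hμ
  have hlim : Tendsto (fun n => sqNorm (convPow μ n) - sqNorm (convPow μ (n + k))) atTop (𝓝 0) := by
    have hL := tendsto_atTop_ciInf hanti ⟨0, Set.forall_mem_range.2 fun n => sqNorm_nonneg _⟩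
    simpa using hL.sub (hL.comp (tendsto_add_atTop_nat k))
  refine squeeze_zero (fun n => sqDist_nonneg _ _) (fun n => ?_)
    (by simpa using hlim.div_const (convPow μ k h))
  rw [le_div_iff₀ hk, mul_comm, convPow_add hμ n k]
  exact le_hasSum (hasSum_mul_sqDist_mconv (hμ.convPow n) (hμ.convPow k)) h fun j _ =>
    mul_nonneg ((hμ.convPow k).nonneg j) (sqDist_nonneg _ _)

end Energy

section Stabilizer

variable [Group G]

theorem sqDist_comp_mulRight (u v : G → ℝ) (s : G) :
    (sqDist (fun g => u (g * s)) fun g => v (g * s)) = sqDist u v :=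
  sqDist_comp_equiv (Equiv.mulRight s) u v

noncomputable def asymptoticStabilizer (F : ℕ → G → ℝ) (hF : ∀ n, Summable (F n · ^ 2)) :
    Subgroup G where
  carrier := {s | Tendsto (fun n => sqDist (F n) fun g => F n (g * s)) atTop (𝓝 0)}
  one_mem' := by simp [sqDist]
  inv_mem' {s} hs := by
    refine hs.congr fun n => ?_
    rw [sqDist_comm, ← sqDist_comp_mulRight _ _ s⁻¹]
    simp only [inv_mul_cancel_right]
  mul_mem' {s t} hs ht := by
    have htr : ∀ n (r : G), Summable fun g => F n (g * r) ^ 2 := fun n r =>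
      (Equiv.mulRight r).summable_iff.2 (hF n)
    refine squeeze_zero (fun n => sqDist_nonneg _ _) (fun n => ?_)
      (by simpa using (hs.const_mul 2).add (ht.const_mul 2))
    calc (sqDist (F n) fun g => F n (g * (s * t)))
        ≤ 2 * (sqDist (F n) fun g => F n (g * s)) +
          2 * sqDist (fun g => F n (g * s)) fun g => F n (g * (s * t)) :=
          sqDist_le_two_mul_add (hF n) (htr n s) (htr n (s * t))
      _ = _ := by rw [← sqDist_comp_mulRight (F n) (fun g => F n (g * t)) s]; simp only [mul_assoc]

theorem mem_asymptoticStabilizer {F : ℕ → G → ℝ} {hF : ∀ n, Summable (F n · ^ 2)} {s : G} :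
    s ∈ asymptoticStabilizer F hF ↔
      Tendsto (fun n => sqDist (F n) fun g => F n (g * s)) atTop (𝓝 0) :=
  Iff.rfl

variable {μ : G → ℝ}

theorem mul_inv_mem_asymptoticStabilizer (hμ : IsProbMeas μ) {k : ℕ} {h h' : G}
    (hh : 0 < convPow μ k h) (hh' : 0 < convPow μ k h') :
    h * h'⁻¹ ∈ asymptoticStabilizer (convPow μ) fun n => (hμ.convPow n).summable_sq := by
  have hlim := ((tendsto_sqDist_convPow_add hμ hh).const_mul 2).add
    ((tendsto_sqDist_convPow_add hμ hh').const_mul 2)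
  rw [mul_zero, add_zero] at hlim
  refine mem_asymptoticStabilizer.2 (squeeze_zero (fun n => sqDist_nonneg _ _) (fun n => ?_) hlim)
  have htr : ∀ r : G, Summable fun g => convPow μ n (g * r) ^ 2 := fun r =>
    ((hμ.convPow n).comp_equiv (Equiv.mulRight r)).summable_sq
  calc (sqDist (convPow μ n) fun g => convPow μ n (g * (h * h'⁻¹)))
      = sqDist (fun g => convPow μ n (g * h⁻¹)) fun g => convPow μ n (g * h'⁻¹) := by
        rw [← sqDist_comp_mulRight _ _ h⁻¹]; simp only [mul_assoc, inv_mul_cancel_left]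
    _ ≤ 2 * (sqDist (fun g => convPow μ n (g * h⁻¹)) (convPow μ (n + k))) +
          2 * sqDist (convPow μ (n + k)) fun g => convPow μ n (g * h'⁻¹) :=
        sqDist_le_two_mul_add (htr h⁻¹) (hμ.convPow (n + k)).summable_sq (htr h'⁻¹)
    _ = 2 * (sqDist (convPow μ (n + k)) fun g => convPow μ n (g * h⁻¹)) +
          2 * sqDist (convPow μ (n + k)) fun g => convPow μ n (g * h'⁻¹) := by
        rw [sqDist_comm (fun g => convPow μ n (g * h⁻¹))]

theorem tendsto_zero_of_infinite_asymptoticStabilizer {F : ℕ → G → ℝ}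
    (hF : ∀ n, IsProbMeas (F n))
    (hinf : (asymptoticStabilizer F fun n => (hF n).summable_sq : Set G).Infinite) (g : G) :
    Tendsto (fun n => F n g) atTop (𝓝 0) := by
  refine tendsto_order.2
    ⟨fun a ha => .of_forall fun n => ha.trans_le ((hF n).nonneg g), fun ε hε => ?_⟩
  obtain ⟨M, hM⟩ := exists_nat_gt (2 / ε)
  obtain ⟨t, hts, rfl⟩ := hinf.exists_subset_card_eq M
  have hclose : ∀ᶠ n in atTop, ∀ s ∈ t, (sqDist (F n) fun x => F n (x * s)) < (ε / 2) ^ 2 :=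
    (eventually_all_finset t).2 fun s hs => (hts hs).eventually (gt_mem_nhds (by positivity))
  refine hclose.mono fun n hn => lt_of_not_ge fun hεn => ?_
  have hbig : ∀ s ∈ t, ε / 2 ≤ F n (g * s) := fun s hs => by
    have hsq : (F n g - F n (g * s)) ^ 2 < (ε / 2) ^ 2 :=
      (sq_sub_le_sqDist (hF n).summable_sq
        ((hF n).comp_equiv (Equiv.mulRight s)).summable_sq g).trans_lt (hn s hs)
    nlinarith [(hF n).nonneg (g * s)]
  have hM' : 1 < t.card * (ε / 2) := by
    rw [div_lt_iff₀ hε] at hM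
    linarith
  exact hM'.not_ge ((hF n).card_mul_le_one g t hbig)

end Stabilizer

theorem Subgroup.finite_of_mul_pow_inv_mem [Group G] {H : Subgroup G} (hH : (H : Set G).Finite)
    {x : G} {j : ℕ} (hj : j ≠ 0) (hxj : x ^ j ∈ H) (hcover : ∀ g, ∃ n : ℕ, g * (x ^ n)⁻¹ ∈ H) :
    Finite G := by
  have hx : IsOfFinOrder x :=
    (finite_powers.1 (hH.subset fun _ ⟨m, hm⟩ => hm ▸ H.pow_mem hxj m)).of_pow hj
  refine Set.finite_univ_iff.1 ((hH.mul hx.finite_powers).subset fun g _ => ?_)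
  obtain ⟨n, hn⟩ := hcover g
  exact ⟨_, hn, x ^ n, ⟨n, rfl⟩, inv_mul_cancel_right g (x ^ n)⟩

theorem tendsto_convPow_zero_of_finite_asymptoticStabilizer [Group G] [Infinite G] {μ : G → ℝ}
    (hμ : IsProbMeas μ) (hirr : MeasIrreducible μ)
    (hfin : (asymptoticStabilizer (convPow μ) fun n => (hμ.convPow n).summable_sq : Set G).Finite)
    (g : G) : Tendsto (fun n => convPow μ n g) atTop (𝓝 0) := by
  set S := asymptoticStabilizer (convPow μ) fun n => (hμ.convPow n).summable_sq
  obtain ⟨x, hx⟩ := hμ.exists_pos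
  have hcoset : ∀ n u, 0 < convPow μ n u → u * (x ^ n)⁻¹ ∈ S := fun n u hu =>
    mul_inv_mem_asymptoticStabilizer hμ hu (convPow_pow_pos hμ hx n)
  have hpow : ∀ j ≠ 0, x ^ j ∉ S := fun j hj hxj => by
    have := Subgroup.finite_of_mul_pow_inv_mem hfin hj hxj fun u =>
      (hirr u).imp fun n hn => hcoset n u hn.2
    exact not_finite G
  have hunique : {n | 0 < convPow μ n g}.Subsingleton := by
    intro n hn m hm
    wlog hnm : n ≤ m generalizing n m
    · exact (this hm hn (le_of_not_ge hnm)).symm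
    by_contra hne
    refine hpow (m - n) (by omega) ?_
    rw [pow_sub x hnm]
    convert S.mul_mem (S.inv_mem (hcoset m g hm)) (hcoset n g hn) using 1
    group
  refine tendsto_const_nhds.congr' ?_
  rw [← Nat.cofinite_eq_atTop]
  refine eventually_cofinite.2 (hunique.finite.subset fun n hn => ?_)
  exact lt_of_le_of_ne ((hμ.convPow n).nonneg g) hn

/-- For an infinite discrete group `G` and an irreducible probability
measure `μ`, the convolution powers converge to zero pointwise: `μ^{⋆n}({g}) → 0`. -/
theorem pointwise_to_zero [Group G] [Infinite G] (μ : G → ℝ)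
    (hμ : IsProbMeas μ) (hirr : MeasIrreducible μ) (g : G) :
    Tendsto (fun n : ℕ => convPow μ n g) atTop (𝓝 0) := by
  rcases Set.finite_or_infinite
      (asymptoticStabilizer (convPow μ) fun n => (hμ.convPow n).summable_sq : Set G)
    with hfin | hinf
  · exact tendsto_convPow_zero_of_finite_asymptoticStabilizer hμ hirr hfin g
  · exact tendsto_zero_of_infinite_asymptoticStabilizer hμ.convPow hinf g
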